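/- arXiv:2003.14204 — 2 statements merged into one kernel-verified Lean document; each statement's English description precedes it below -/
import Mathlib

section
/- Let ⟨N, M0⟩ be a marked Petri net with a basis partition π = (T_E, T_I), let the set of final markings be given by a single GMEC, M_F = { M : P → ℕ | wᵀ·M ≤ k } for some w ∈ ℤ^P and k ∈ ℤ, and let M_b ∈ M_BM be a minimax basis marking. Then M_b belongs to the set of i-coreachable minimax basis markings M_ico = { M_b ∈ M_BM | R_I(M_b) ∩ M_F ≠ ∅ } if and only if there exist y_I ∈ ℕ^{T_I} and M : P → ℕ such that M = M_b + C_I·y_I (as integer vectors) and wᵀ·M ≤ k. -/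
open scoped BigOperators

/-- A Petri net over places `P` and transitions `T`. -/
structure PetriNet (P T : Type) where
  Pre : P → T → ℕ
  Post : P → T → ℕ

namespace PetriNet

variable {P T : Type}

/-- Incidence matrix `C = Post − Pre` (integer valued). -/
def C (N : PetriNet P T) (p : P) (t : T) : ℤ :=
  (N.Post p t : ℤ) - (N.Pre p t : ℤ)

/-- A transition `t` is enabled at marking `M`. -/
def Enabled (N : PetriNet P T) (M : P → ℕ) (t : T) : Prop :=
  ∀ p, N.Pre p t ≤ M p

/-- `Fires N M σ M'` means the sequence `σ` is enabled at `M` and its firing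
yields `M'`, i.e. `M[σ⟩M'`. -/
inductive Fires (N : PetriNet P T) : (P → ℕ) → List T → (P → ℕ) → Prop
  | nil (M : P → ℕ) : Fires N M [] M
  | cons {M M' M'' : P → ℕ} {t : T} {σ : List T} :
      N.Enabled M t →
      (∀ p, M' p = M p + N.Post p t - N.Pre p t) →
      Fires N M' σ M'' →
      Fires N M (t :: σ) M''

/-- The reachability set `R(N, M0)`. -/
def Reach (N : PetriNet P T) (M0 : P → ℕ) : Set (P → ℕ) :=
  {M | ∃ σ : List T, N.Fires M0 σ M}

/-- Arcs of the underlying directed graph on `P ⊕ T`, where only transitions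
in `TI` are kept (the `TI`-induced subnet). -/
def Arc (N : PetriNet P T) (TI : Set T) : (P ⊕ T) → (P ⊕ T) → Prop
  | Sum.inl p, Sum.inr t => t ∈ TI ∧ 0 < N.Pre p t
  | Sum.inr t, Sum.inl p => t ∈ TI ∧ 0 < N.Post p t
  | _, _ => False

/-- The `TI`-induced subnet is acyclic: no directed cycle in its graph. -/
def AcyclicOn (N : PetriNet P T) (TI : Set T) : Prop :=
  ∀ x, ¬ Relation.TransGen (N.Arc TI) x x

/-- `(TE, TI)` is a basis partition: `TE` and `TI` partition `T` and the
`TI`-induced subnet is acyclic. -/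
def IsBasisPartition (N : PetriNet P T) (TE TI : Set T) : Prop :=
  (∀ t, t ∈ TE ↔ t ∉ TI) ∧ N.AcyclicOn TI

/-- Boundedness of the marked net `⟨N, M0⟩`. -/
def Bounded (N : PetriNet P T) (M0 : P → ℕ) : Prop :=
  ∃ k : ℕ, ∀ M ∈ N.Reach M0, ∀ p, M p ≤ k

/-- A marking is dead if no transition is enabled at it. -/
def Dead (N : PetriNet P T) (M : P → ℕ) : Prop :=
  ∀ t : T, ¬ N.Enabled M t

/-- The set `Σ(M, t)` of explanations of `t` at `M`: implicit sequences whose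
firing from `M` yields a marking enabling `t`. -/
def Expl (N : PetriNet P T) (TI : Set T) (M : P → ℕ) (t : T) : Set (List T) :=
  {σ | (∀ u ∈ σ, u ∈ TI) ∧ ∃ M', N.Fires M σ M' ∧ ∀ p, N.Pre p t ≤ M' p}

/-- The set `Σ_min(M, t)` of minimal explanations of `t` at `M`. -/
def ExplMin [DecidableEq T] (N : PetriNet P T) (TI : Set T) (M : P → ℕ) (t : T) :
    Set (List T) :=
  {σ | σ ∈ N.Expl TI M t ∧
    ¬ ∃ σ' ∈ N.Expl TI M t,
      (∀ u, σ'.count u ≤ σ.count u) ∧ ∃ u, σ'.count u ≠ σ.count u}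

/-- The set `Σ_max(M, t)` of maximal explanations of `t` at `M`. -/
def ExplMax [DecidableEq T] (N : PetriNet P T) (TI : Set T) (M : P → ℕ) (t : T) :
    Set (List T) :=
  {σ | σ ∈ N.Expl TI M t ∧
    ¬ ∃ σ' ∈ N.Expl TI M t,
      (∀ u, σ.count u ≤ σ'.count u) ∧ ∃ u, σ'.count u ≠ σ.count u}

/-- `Y_min(M, t)`: firing vectors of minimal explanations. -/
def Ymin [DecidableEq T] (N : PetriNet P T) (TI : Set T) (M : P → ℕ) (t : T) :
    Set (T → ℕ) :=
  {y | ∃ σ ∈ N.ExplMin TI M t, ∀ u, σ.count u = y u}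

/-- `Y_max(M, t)`: firing vectors of maximal explanations. -/
def Ymax [DecidableEq T] (N : PetriNet P T) (TI : Set T) (M : P → ℕ) (t : T) :
    Set (T → ℕ) :=
  {y | ∃ σ ∈ N.ExplMax TI M t, ∀ u, σ.count u = y u}

/-- The set of basis markings `M_B` (smallest set containing `M0` and closed
under minimal-explanation steps). -/
inductive Basis [DecidableEq T] [Fintype T] (N : PetriNet P T) (TE TI : Set T)
    (M0 : P → ℕ) : (P → ℕ) → Prop
  | base : Basis N TE TI M0 M0
  | step {M M' : P → ℕ} {t : T} {y : T → ℕ} :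
      Basis N TE TI M0 M →
      t ∈ TE →
      y ∈ N.Ymin TI M t →
      (∀ p, (M' p : ℤ) = (M p : ℤ) + (∑ u, N.C p u * y u) + N.C p t) →
      Basis N TE TI M0 M'

/-- The set of minimax basis markings `M_BM` (smallest set containing `M0` and
closed under minimal- or maximal-explanation steps). -/
inductive Minimax [DecidableEq T] [Fintype T] (N : PetriNet P T) (TE TI : Set T)
    (M0 : P → ℕ) : (P → ℕ) → Prop
  | base : Minimax N TE TI M0 M0
  | step {M M' : P → ℕ} {t : T} {y : T → ℕ} :
      Minimax N TE TI M0 M →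
      t ∈ TE →
      (y ∈ N.Ymin TI M t ∨ y ∈ N.Ymax TI M t) →
      (∀ p, (M' p : ℤ) = (M p : ℤ) + (∑ u, N.C p u * y u) + N.C p t) →
      Minimax N TE TI M0 M'

/-- The implicit reach `R_I(M_b)`: markings reachable from `M_b` by firing
only implicit transitions. -/
def ReachI (N : PetriNet P T) (TI : Set T) (Mb : P → ℕ) : Set (P → ℕ) :=
  {M | ∃ σ : List T, (∀ u ∈ σ, u ∈ TI) ∧ N.Fires Mb σ M}

/-- One step of the minimax-BRG: `M1 ⇒ M2`. -/
def BrgStep [DecidableEq T] [Fintype T] (N : PetriNet P T) (TE TI : Set T)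
    (M1 M2 : P → ℕ) : Prop :=
  ∃ t ∈ TE, ∃ y : T → ℕ, (y ∈ N.Ymin TI M1 t ∨ y ∈ N.Ymax TI M1 t) ∧
    ∀ p, (M2 p : ℤ) = (M1 p : ℤ) + (∑ u, N.C p u * y u) + N.C p t

/-- One step of the BRG using only minimal explanations. -/
def MinBrgStep [DecidableEq T] [Fintype T] (N : PetriNet P T) (TE TI : Set T)
    (M1 M2 : P → ℕ) : Prop :=
  ∃ t ∈ TE, ∃ y ∈ N.Ymin TI M1 t,
    ∀ p, (M2 p : ℤ) = (M1 p : ℤ) + (∑ u, N.C p u * y u) + N.C p t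

/-- The minimax-BRG is unobstructed: every minimax basis marking can reach, by
BRG-steps, an i-coreachable minimax basis marking. -/
def Unobstructed [DecidableEq T] [Fintype T] (N : PetriNet P T) (TE TI : Set T)
    (M0 : P → ℕ) (MF : Set (P → ℕ)) : Prop :=
  ∀ Mb, N.Minimax TE TI M0 Mb →
    ∃ Mb', Relation.ReflTransGen (N.BrgStep TE TI) Mb Mb' ∧
      N.Minimax TE TI M0 Mb' ∧ (N.ReachI TI Mb' ∩ MF).Nonempty

/-- `Σ_I,max(M)`: maximal implicit firing sequences at `M`. -/
def ImplMax [DecidableEq T] (N : PetriNet P T) (TI : Set T) (M : P → ℕ) :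
    Set (List T) :=
  {σ | (∀ u ∈ σ, u ∈ TI) ∧ (∃ M', N.Fires M σ M') ∧
    ¬ ∃ σ' : List T, (∀ u ∈ σ', u ∈ TI) ∧ (∃ M', N.Fires M σ' M') ∧
      (∀ u, σ.count u ≤ σ'.count u) ∧ ∃ u, σ'.count u ≠ σ.count u}

/-- `Y_I,max(M)`: firing vectors of maximal implicit firing sequences. -/
def YImax [DecidableEq T] (N : PetriNet P T) (TI : Set T) (M : P → ℕ) :
    Set (T → ℕ) :=
  {y | ∃ σ ∈ N.ImplMax TI M, ∀ u, σ.count u = y u}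

end PetriNet

/-! The state equation `M = M_b + C·φ(σ)` of a firing sequence gives one direction. Conversely,
let `y ≥ 0` be supported on implicit transitions with `M_b + C·y ≥ 0`. As the implicit subnet is
acyclic, the support of `y` contains a transition `t` none of whose input places is an output
place of a transition in the support. On an input place `p` of `t` the vector `C·y` only removes
tokens, at least `Pre(p,t)` of them, so `M_b + C·y ≥ 0` forces `t` to be enabled at `M_b`.
Firing `t` and decreasing `y t` by one, induction on `∑ y` realises `y` by a firing sequence. -/

namespace PetriNet

variable {P T : Type} (N : PetriNet P T)

lemma natCast_fire_eq {M : P → ℕ} {t : T} (hen : N.Enabled M t) (p : P) :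
    ((M p + N.Post p t - N.Pre p t : ℕ) : ℤ) = M p + N.C p t := by
  have := hen p
  simp only [C]
  omega

lemma Fires.natCast_eq_add_sum_map {M M' : P → ℕ} {σ : List T} (h : N.Fires M σ M') (p : P) :
    (M' p : ℤ) = M p + (σ.map (N.C p)).sum := by
  induction h with
  | nil => simp
  | cons hen hstep _ ih =>
    rw [ih, hstep, natCast_fire_eq N hen, List.map_cons, List.sum_cons, add_assoc]

lemma Fires.natCast_eq_add_sum_count [Fintype T] [DecidableEq T] {M M' : P → ℕ} {σ : List T}
    (h : N.Fires M σ M') (p : P) :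
    (M' p : ℤ) = M p + ∑ t, N.C p t * σ.count t := by
  rw [h.natCast_eq_add_sum_map, Finset.sum_list_map_count,
    Finset.sum_subset (Finset.subset_univ _)]
  · simp only [nsmul_eq_mul, mul_comm]
  · intro t _ ht
    simp [List.count_eq_zero_of_not_mem (by simpa using ht)]

lemma AcyclicOn.exists_forall_post_eq_zero [Finite T] {TI : Set T} (hac : N.AcyclicOn TI)
    {s : Set T} (hs : s.Nonempty) (hsTI : s ⊆ TI) :
    ∃ t ∈ s, ∀ p, 0 < N.Pre p t → ∀ u ∈ s, N.Post p u = 0 := by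
  let r : T → T → Prop := fun a b => Relation.TransGen (N.Arc TI) (.inr a) (.inr b)
  have : IsTrans T r := ⟨fun _ _ _ => Relation.TransGen.trans⟩
  have : Std.Irrefl r := ⟨fun a => hac _⟩
  obtain ⟨t, hts, hmin⟩ := (Finite.wellFounded_of_trans_of_irrefl r).has_min s hs
  refine ⟨t, hts, fun p hpre u hus => Nat.eq_zero_of_not_pos fun hpost => hmin u hus ?_⟩
  exact .head (show N.Arc TI (.inr u) (.inl p) from ⟨hsTI hus, hpost⟩)
    (.single ⟨hsTI hts, hpre⟩)

lemma sum_C_mul_le_neg_pre_mul [Fintype T] {p : P} {y : T → ℕ}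
    (hpost : ∀ u, y u ≠ 0 → N.Post p u = 0) (t : T) :
    ∑ u, N.C p u * y u ≤ -((N.Pre p t * y t : ℕ) : ℤ) := by
  have hterm : ∀ u, N.C p u * y u = -((N.Pre p u * y u : ℕ) : ℤ) := by
    intro u
    by_cases hu : y u = 0
    · simp [hu]
    · simp [C, hpost u hu]
  rw [Finset.sum_congr rfl fun u _ => hterm u, Finset.sum_neg_distrib, neg_le_neg_iff,
    ← Nat.cast_sum, Nat.cast_le]
  exact Finset.single_le_sum (f := fun u => N.Pre p u * y u) (fun _ _ => Nat.zero_le _)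
    (Finset.mem_univ t)

lemma AcyclicOn.exists_enabled [Fintype T] {TI : Set T} (hac : N.AcyclicOn TI)
    {M : P → ℕ} {y : T → ℕ} (hyTI : ∀ t ∉ TI, y t = 0) (hy : y ≠ 0)
    (hM : ∀ p, 0 ≤ (M p : ℤ) + ∑ t, N.C p t * y t) :
    ∃ t, y t ≠ 0 ∧ N.Enabled M t := by
  obtain ⟨t, hyt, hsource⟩ := hac.exists_forall_post_eq_zero N (s := {t | y t ≠ 0})
    (Function.ne_iff.mp hy) fun u hu => by_contra fun h => hu (hyTI u h)
  refine ⟨t, hyt, fun p => ?_⟩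
  rcases Nat.eq_zero_or_pos (N.Pre p t) with hpre | hpre
  · simp [hpre]
  · have hsum := N.sum_C_mul_le_neg_pre_mul (hsource p hpre) t
    have hle : N.Pre p t ≤ N.Pre p t * y t := Nat.le_mul_of_pos_right _ (Nat.pos_of_ne_zero hyt)
    have := hM p
    omega

lemma sum_C_mul_add_single [Fintype T] [DecidableEq T] (p : P) (y : T → ℕ) (t : T) :
    ∑ u, N.C p u * ((y + Pi.single t 1 : T → ℕ) u : ℤ) = ∑ u, N.C p u * y u + N.C p t := by
  simp [mul_add, Finset.sum_add_distrib, Pi.single_apply]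

theorem exists_fires_of_natCast_eq [Fintype T] {TI : Set T} (hac : N.AcyclicOn TI)
    {M M' : P → ℕ} {y : T → ℕ} (hyTI : ∀ t ∉ TI, y t = 0)
    (h : ∀ p, (M' p : ℤ) = M p + ∑ t, N.C p t * y t) :
    ∃ σ : List T, (∀ u ∈ σ, u ∈ TI) ∧ N.Fires M σ M' := by
  classical
  induction hn : ∑ t, y t generalizing M y with
  | zero =>
    have hy : y = 0 := funext fun t => Finset.sum_eq_zero_iff.mp hn t (Finset.mem_univ t)
    have hM : M' = M := funext fun p => by simpa [hy] using h p
    exact ⟨[], by simp, hM ▸ .nil M'⟩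
  | succ n ih =>
    have hy : y ≠ 0 := by
      rintro rfl
      simp at hn
    obtain ⟨t, hyt, hen⟩ := hac.exists_enabled N hyTI hy fun p => by rw [← h p]; positivity
    obtain ⟨y', rfl⟩ : ∃ y', y = y' + Pi.single t 1 :=
      ⟨Function.update y t (y t - 1), by ext u; by_cases hu : u = t <;> simp [hu]; omega⟩
    have htTI : t ∈ TI := by_contra fun ht => hyt (hyTI t ht)
    obtain ⟨σ, hσTI, hσ⟩ := ih (M := fun p => M p + N.Post p t - N.Pre p t) (y := y')
      (fun u hu => (Nat.add_eq_zero_iff.mp (hyTI u hu)).1)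
      (fun p => by rw [h p, sum_C_mul_add_single, natCast_fire_eq N hen]; ring)
      (by simpa [Finset.sum_add_distrib] using hn)
    refine ⟨t :: σ, ?_, .cons hen (fun _ => rfl) hσ⟩
    simpa [htTI] using hσTI

theorem mem_reachI_iff [Fintype T] {TI : Set T} (hac : N.AcyclicOn TI) {Mb M : P → ℕ} :
    M ∈ N.ReachI TI Mb ↔
      ∃ y : T → ℕ, (∀ t ∉ TI, y t = 0) ∧ ∀ p, (M p : ℤ) = Mb p + ∑ t, N.C p t * y t := by
  classical
  constructor
  · rintro ⟨σ, hσTI, hσ⟩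
    exact ⟨fun t => σ.count t,
      fun t ht => List.count_eq_zero_of_not_mem fun hmem => ht (hσTI t hmem),
      hσ.natCast_eq_add_sum_count N⟩
  · rintro ⟨y, hyTI, h⟩
    exact N.exists_fires_of_natCast_eq hac hyTI h

end PetriNet

open PetriNet in
theorem statement4_general {P T : Type} [Fintype P] [Fintype T]
    (N : PetriNet P T) (TE TI : Set T)
    (hbp : N.IsBasisPartition TE TI)
    (w : P → ℤ) (k : ℤ)
    (Mb : P → ℕ) :
    (N.ReachI TI Mb ∩ {M : P → ℕ | ∑ p, w p * (M p : ℤ) ≤ k}).Nonempty ↔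
      ∃ (yI : T → ℕ) (M : P → ℕ), (∀ t ∉ TI, yI t = 0) ∧
        (∀ p, (M p : ℤ) = (Mb p : ℤ) + ∑ t, N.C p t * yI t) ∧
        ∑ p, w p * (M p : ℤ) ≤ k := by
  simp only [Set.Nonempty, Set.mem_inter_iff, N.mem_reachI_iff hbp.2, Set.mem_ofPred_eq]
  exact ⟨fun ⟨M, ⟨y, hyTI, hM⟩, hwk⟩ => ⟨y, M, hyTI, hM, hwk⟩,
    fun ⟨y, M, hyTI, hM, hwk⟩ => ⟨M, ⟨y, hyTI, hM⟩, hwk⟩⟩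

open PetriNet in
/-- For a set of final markings given by a single GMEC
`(w, k)`, a minimax basis marking `M_b` is i-coreachable iff the integer
constraint set `M = M_b + C_I·y_I`, `wᵀ·M ≤ k` is feasible. -/
theorem statement4 {P T : Type} [Fintype P] [Fintype T] [DecidableEq T]
    (N : PetriNet P T) (M0 : P → ℕ) (TE TI : Set T)
    (hbp : N.IsBasisPartition TE TI)
    (w : P → ℤ) (k : ℤ)
    (Mb : P → ℕ) (hMb : N.Minimax TE TI M0 Mb) :
    (N.ReachI TI Mb ∩ {M : P → ℕ | ∑ p, w p * (M p : ℤ) ≤ k}).Nonempty ↔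
      ∃ (yI : T → ℕ) (M : P → ℕ), (∀ t ∉ TI, yI t = 0) ∧
        (∀ p, (M p : ℤ) = (Mb p : ℤ) + ∑ t, N.C p t * yI t) ∧
        ∑ p, w p * (M p : ℤ) ≤ k :=
  statement4_general N TE TI hbp w k Mb
end

section
/- Let G = (N, M0, M_F) be a plant with a basis partition π = (T_E, T_I). Then the minimax-BRG of G is unobstructed if and only if every minimax basis marking M_b ∈ M_BM is nonblocking. -/
/-!
An implicit run `τ` from a basis marking `Mb` followed by an explicit transition `t` makes `τ` an
explanation of `t`, so it dominates a minimal explanation `σ`. The BRG-step along `σ` and `t`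
leads to a basis marking `Mb'` such that the marking reached by `τ t` solves the state equation
from `Mb'` for the leftover implicit firings `τ - σ`; since the implicit subnet is acyclic, the
state equation alone guarantees that these can be fired. Following a run from `Mb` to a final
marking explicit transition by explicit transition therefore yields a BRG path to an
i-coreachable basis marking. Conversely, BRG-steps and implicit runs are firing sequences of the
net.
-/

open scoped BigOperators

namespace PetriNet

variable {P T : Type} {N : PetriNet P T} {TE TI : Set T} {M M' Mb : P → ℕ} {t : T}

-- Truncated subtraction: this is the successor marking only when `t` is enabled at `M`.
def fire (N : PetriNet P T) (M : P → ℕ) (t : T) : P → ℕ :=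
  fun p => M p + N.Post p t - N.Pre p t

lemma cast_fire (h : N.Enabled M t) (p : P) : (N.fire M t p : ℤ) = M p + N.C p t := by
  rw [fire, Nat.cast_sub ((h p).trans (Nat.le_add_right _ _))]
  push_cast [C]
  ring

lemma ext_of_cast_eq {M M' : P → ℕ} (h : ∀ p, (M p : ℤ) = M' p) : M = M' :=
  funext fun p => by exact_mod_cast h p

lemma Fires.append {σ τ : List T} {M'' : P → ℕ} (h₁ : N.Fires M σ M') (h₂ : N.Fires M' τ M'') :
    N.Fires M (σ ++ τ) M'' := by
  induction h₁ with
  | nil => exact h₂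
  | cons hen hM _ ih => exact .cons hen hM (ih h₂)

lemma Fires.state_eq {σ : List T} (h : N.Fires M σ M') (p : P) :
    (M' p : ℤ) = M p + (σ.map (N.C p)).sum := by
  induction h with
  | nil => simp
  | @cons M₁ M₂ _ u _ hen hM _ ih =>
    rw [ih, show M₂ = N.fire M₁ u from funext hM, cast_fire hen, List.map_cons, List.sum_cons]
    ring

lemma sum_mul_count_eq_sum_map [Fintype T] [DecidableEq T] (f : T → ℤ) (l : List T) :
    ∑ u, f u * l.count u = (l.map f).sum := by
  rw [Finset.sum_list_map_count, ← Finset.sum_subset (Finset.subset_univ l.toFinset)]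
  · simp [mul_comm]
  · intro u _ hu
    simp [List.count_eq_zero_of_not_mem (by simpa using hu)]

lemma reach_trans {M'' : P → ℕ} (h₁ : M' ∈ N.Reach M) (h₂ : M'' ∈ N.Reach M') :
    M'' ∈ N.Reach M := by
  obtain ⟨σ, hσ⟩ := h₁
  obtain ⟨τ, hτ⟩ := h₂
  exact ⟨σ ++ τ, hσ.append hτ⟩

lemma reach_of_mem_reachI (h : M' ∈ N.ReachI TI M) : M' ∈ N.Reach M :=
  let ⟨σ, _, hσ⟩ := h
  ⟨σ, hσ⟩

lemma fire_mem_reachI (h : M ∈ N.ReachI TI Mb) (ht : t ∈ TI) (hen : N.Enabled M t) :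
    N.fire M t ∈ N.ReachI TI Mb := by
  obtain ⟨σ, hσI, hσ⟩ := h
  refine ⟨σ ++ [t], ?_, hσ.append (.cons hen (fun _ => rfl) (.nil _))⟩
  simpa [or_imp, forall_and] using ⟨hσI, ht⟩

lemma AcyclicOn.wellFounded [Finite T] (hac : N.AcyclicOn TI) :
    WellFounded fun u v : T => Relation.TransGen (N.Arc TI) (.inr u) (.inr v) :=
  have : IsTrans T fun u v => Relation.TransGen (N.Arc TI) (.inr u) (.inr v) :=
    ⟨fun _ _ _ => .trans⟩
  have : Std.Irrefl fun u v : T => Relation.TransGen (N.Arc TI) (.inr u) (.inr v) :=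
    ⟨fun u => hac (.inr u)⟩
  Finite.wellFounded_of_trans_of_irrefl _

/-- No transition of `ρ` puts tokens on a place in the preset of the `Arc`-minimal `t`, so such a
place only loses tokens along `ρ`; nonnegativity of `M'` then forces `t` to be enabled at `M`. -/
lemma enabled_of_state_eq [DecidableEq T] {ρ : List T} (hρ : ∀ u ∈ ρ, u ∈ TI) (ht : t ∈ ρ)
    (hmin : ∀ u ∈ ρ, ¬ Relation.TransGen (N.Arc TI) (.inr u) (.inr t))
    (h : ∀ p, (M' p : ℤ) = M p + (ρ.map (N.C p)).sum) : N.Enabled M t := by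
  intro p
  by_contra! hlt
  have hpt : N.Arc TI (.inl p) (.inr t) := ⟨hρ t ht, by omega⟩
  have hC : ∀ u ∈ ρ, N.C p u = -N.Pre p u := by
    intro u hu
    have : N.Post p u = 0 := by
      by_contra hpost
      exact hmin u hu (.tail (.single (show N.Arc TI (.inr u) (.inl p) from
        ⟨hρ u hu, Nat.pos_of_ne_zero hpost⟩)) hpt)
    simp [C, this]
  have hrest : ((ρ.erase t).map (N.C p)).sum ≤ 0 := by
    simpa using List.sum_le_card_nsmul ((ρ.erase t).map (N.C p)) 0 fun x hx => by
      obtain ⟨u, hu, rfl⟩ := List.mem_map.1 hx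
      simp [hC u (List.mem_of_mem_erase hu)]
  have hsum : (ρ.map (N.C p)).sum = N.C p t + ((ρ.erase t).map (N.C p)).sum := by
    rw [((List.perm_cons_erase ht).map _).sum_eq, List.map_cons, List.sum_cons]
  have := h p
  rw [hsum, hC t ht] at this
  omega

theorem AcyclicOn.mem_reachI_of_state_eq [Finite T] [DecidableEq T] (hac : N.AcyclicOn TI)
    (ρ : List T) (hρ : ∀ u ∈ ρ, u ∈ TI) (M M' : P → ℕ)
    (h : ∀ p, (M' p : ℤ) = M p + (ρ.map (N.C p)).sum) : M' ∈ N.ReachI TI M := by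
  induction hlen : ρ.length using Nat.strong_induction_on generalizing ρ M with
  | _ n ih =>
  by_cases hnil : ρ = []
  · subst hnil
    obtain rfl : M' = M := ext_of_cast_eq fun p => by simpa using h p
    exact ⟨[], by simp, .nil _⟩
  obtain ⟨t, ht, hmin⟩ := hac.wellFounded.has_min {u | u ∈ ρ} (List.exists_mem_of_ne_nil ρ hnil)
  have hen : N.Enabled M t := enabled_of_state_eq hρ ht hmin h
  have hlen' : (ρ.erase t).length < n := by
    rw [List.length_erase_of_mem ht]
    have := List.length_pos_of_mem ht
    omega
  obtain ⟨τ, hτI, hτ⟩ : M' ∈ N.ReachI TI (N.fire M t) := by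
    refine ih _ hlen' (ρ.erase t) (fun u hu => hρ u (List.mem_of_mem_erase hu)) _ (fun p => ?_) rfl
    rw [h p, cast_fire hen, ((List.perm_cons_erase ht).map _).sum_eq, List.map_cons,
      List.sum_cons]
    ring
  refine ⟨t :: τ, ?_, .cons hen (fun _ => rfl) hτ⟩
  simpa [forall_and, or_imp] using ⟨hρ t ht, hτI⟩

section Explanations

variable [DecidableEq T]

lemma exists_explMin_subperm {σ : List T} (h : σ ∈ N.Expl TI M t) :
    ∃ σs ∈ N.ExplMin TI M t, σs.Subperm σ := by
  obtain ⟨σs, ⟨hσs, hsub⟩, hmin⟩ :=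
    (InvImage.wf (fun l : List T => (l : Multiset T)) wellFounded_lt).has_min
      {σ' | σ' ∈ N.Expl TI M t ∧ σ'.Subperm σ} ⟨σ, h, List.Subperm.refl σ⟩
  refine ⟨σs, ⟨hσs, ?_⟩, hsub⟩
  rintro ⟨σ', hσ', hle, u, hne⟩
  have hσ'σs : σ'.Subperm σs := List.subperm_iff_count.2 hle
  refine hmin σ' ⟨hσ', hσ'σs.trans hsub⟩ (lt_of_le_of_ne (Multiset.coe_le.2 hσ'σs) fun heq => ?_)
  exact hne (by simpa using congrArg (Multiset.count u) heq)

lemma exists_expl_of_mem_Ymin_or_Ymax {y : T → ℕ} (hy : y ∈ N.Ymin TI M t ∨ y ∈ N.Ymax TI M t) :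
    ∃ σ ∈ N.Expl TI M t, ∀ u, σ.count u = y u := by
  rcases hy with ⟨σ, hσ, hy⟩ | ⟨σ, hσ, hy⟩
  exacts [⟨σ, hσ.1, hy⟩, ⟨σ, hσ.1, hy⟩]

variable [Fintype T]

lemma BrgStep.mem_reach {M₁ M₂ : P → ℕ} (h : N.BrgStep TE TI M₁ M₂) : M₂ ∈ N.Reach M₁ := by
  obtain ⟨t, -, y, hy, hM₂⟩ := h
  obtain ⟨σ, ⟨-, M, hσ, hen⟩, hcount⟩ := exists_expl_of_mem_Ymin_or_Ymax hy
  obtain rfl : N.fire M t = M₂ := ext_of_cast_eq fun p => by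
    simp only [hM₂, cast_fire hen, hσ.state_eq, ← hcount, sum_mul_count_eq_sum_map]
  exact ⟨σ ++ [t], hσ.append (.cons hen (fun _ => rfl) (.nil _))⟩

lemma reach_of_reflTransGen_brgStep {M₁ M₂ : P → ℕ}
    (h : Relation.ReflTransGen (N.BrgStep TE TI) M₁ M₂) : M₂ ∈ N.Reach M₁ := by
  induction h with
  | refl => exact ⟨[], .nil _⟩
  | tail _ hstep ih => exact reach_trans ih hstep.mem_reach

lemma Minimax.of_reflTransGen_brgStep {M0 M₁ M₂ : P → ℕ} (hM₁ : N.Minimax TE TI M0 M₁)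
    (h : Relation.ReflTransGen (N.BrgStep TE TI) M₁ M₂) : N.Minimax TE TI M0 M₂ := by
  induction h with
  | refl => exact hM₁
  | tail _ hstep ih =>
    obtain ⟨t, ht, y, hy, hM⟩ := hstep
    exact .step ih ht hy hM

/-- The BRG-step goes along a minimal explanation `σ` dominated by the implicit run `τ`; the
leftover firings `τ.diff σ` are recovered from the state equation by acyclicity. -/
lemma exists_brgStep_fire_mem_reachI (hac : N.AcyclicOn TI) (htE : t ∈ TE)
    (hM : M ∈ N.ReachI TI Mb) (hen : N.Enabled M t) :
    ∃ Mb', N.BrgStep TE TI Mb Mb' ∧ N.fire M t ∈ N.ReachI TI Mb' := by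
  obtain ⟨τ, hτI, hτ⟩ := hM
  obtain ⟨σ, hσmin, hστ⟩ := exists_explMin_subperm ⟨hτI, M, hτ, hen⟩
  obtain ⟨-, Mσ, hσ, henσ⟩ := hσmin.1
  have hperm : (σ ++ τ.diff σ).Perm τ := List.subperm_append_diff_self_of_count_le fun u _ =>
    hστ.count_le u
  refine ⟨N.fire Mσ t, ⟨t, htE, _, .inl ⟨σ, hσmin, fun _ => rfl⟩, fun p => ?_⟩, ?_⟩
  · rw [cast_fire henσ, hσ.state_eq, sum_mul_count_eq_sum_map]
  · refine hac.mem_reachI_of_state_eq (τ.diff σ) (fun u hu => hτI u (List.diff_subset _ _ hu))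
      _ _ fun p => ?_
    rw [cast_fire hen, cast_fire henσ, hτ.state_eq, hσ.state_eq, ← (hperm.map _).sum_eq,
      List.map_append, List.sum_append]
    ring

theorem exists_brg_path_of_fires (hbp : N.IsBasisPartition TE TI) {MF : Set (P → ℕ)}
    {σ : List T} {Mf : P → ℕ} (hM : M ∈ N.ReachI TI Mb) (hσ : N.Fires M σ Mf) (hMf : Mf ∈ MF) :
    ∃ Mb', Relation.ReflTransGen (N.BrgStep TE TI) Mb Mb' ∧ (N.ReachI TI Mb' ∩ MF).Nonempty := by
  induction hσ generalizing Mb with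
  | nil M => exact ⟨Mb, .refl, M, hM, hMf⟩
  | @cons M M' _ t _ hen hM' _ ih =>
    obtain rfl : M' = N.fire M t := funext hM'
    by_cases ht : t ∈ TI
    · exact ih (fire_mem_reachI hM ht hen) hMf
    · obtain ⟨Mb', hstep, hMb'⟩ := exists_brgStep_fire_mem_reachI hbp.2 ((hbp.1 t).2 ht) hM hen
      obtain ⟨Mb'', hsteps, hcore⟩ := ih hMb' hMf
      exact ⟨Mb'', .head hstep hsteps, hcore⟩

end Explanations

end PetriNet

open PetriNet in
theorem statement5_general {P T : Type} [Fintype T] [DecidableEq T]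
    (N : PetriNet P T) (M0 : P → ℕ) (TE TI : Set T)
    (hbp : N.IsBasisPartition TE TI)
    (MF : Set (P → ℕ)) :
    N.Unobstructed TE TI M0 MF ↔
      ∀ Mb : P → ℕ, N.Minimax TE TI M0 Mb → (N.Reach Mb ∩ MF).Nonempty := by
  constructor
  · intro h Mb hMb
    obtain ⟨Mb', hsteps, -, Mf, hMf, hMfF⟩ := h Mb hMb
    exact ⟨Mf, reach_trans (reach_of_reflTransGen_brgStep hsteps) (reach_of_mem_reachI hMf), hMfF⟩
  · intro h Mb hMb
    obtain ⟨Mf, ⟨σ, hσ⟩, hMfF⟩ := h Mb hMb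
    obtain ⟨Mb', hsteps, hcore⟩ := exists_brg_path_of_fires hbp ⟨[], by simp, .nil Mb⟩ hσ hMfF
    exact ⟨Mb', hsteps, hMb.of_reflTransGen_brgStep hsteps, hcore⟩

open PetriNet in
/-- The minimax-BRG of a plant is unobstructed iff every
minimax basis marking is nonblocking. -/
theorem statement5 {P T : Type} [Fintype T] [DecidableEq T]
    (N : PetriNet P T) (M0 : P → ℕ) (TE TI : Set T)
    (hbp : N.IsBasisPartition TE TI)
    (MF : Set (P → ℕ)) (hMF : MF ⊆ N.Reach M0) :
    N.Unobstructed TE TI M0 MF ↔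
      ∀ Mb : P → ℕ, N.Minimax TE TI M0 Mb → (N.Reach Mb ∩ MF).Nonempty :=
  statement5_general N M0 TE TI hbp MF
end
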